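/- Let X be a real random variable, let W ~ N(0,1) be independent of X, and let Y = X + W, so that the conditional density of Y given X = x is f(y|x) = φ(y − x) with φ the standard Gaussian density. Then V_0(Y|X) = (1/(2√π)) · ( 1 − E[ exp( −(X₁ − X₂)²/4 ) ] ), where X₁, X₂ are independent copies of X. -/

import Mathlib

open MeasureTheory Set
open scoped ENNReal NNReal Real ProbabilityTheory

/-- The standard Gaussian density `φ(x) = (2π)^{-1/2} exp(-x²/2)` on `ℝ`. -/
noncomputable def stdGaussPdf (x : ℝ) : ℝ :=
  (2 * π) ^ (-(1 / 2) : ℝ) * Real.exp (-x ^ 2 / 2)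

/-!
Expanding the square, `V₀(Y|X) = ∫ E[φ(y - X)²] dy - ∫ E[φ(y - X)]² dy`, and by independence
`E[φ(y - X)]² = E[φ(y - X₁) φ(y - X₂)]`. After exchanging the order of integration both terms
are expectations of `∫ φ(y - a) φ(y - b) dy = exp(-(a - b)²/4) / (2√π)`, a Gaussian integral
obtained by completing the square. Since `φ > 0`, the support `S_Y` is all of `ℝ`.
-/

open ProbabilityTheory

lemma stdGaussPdf_pos (x : ℝ) : 0 < stdGaussPdf x := by
  unfold stdGaussPdf
  positivity

lemma stdGaussPdf_le (x : ℝ) : stdGaussPdf x ≤ (2 * π) ^ (-(1 / 2) : ℝ) := by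
  unfold stdGaussPdf
  refine mul_le_of_le_one_right (by positivity) (Real.exp_le_one_iff.mpr ?_)
  nlinarith [sq_nonneg x]

@[fun_prop]
lemma continuous_stdGaussPdf : Continuous stdGaussPdf := by
  unfold stdGaussPdf
  fun_prop

/-- Completing the square: `(y - a)² + (y - b)² = 2 (y - (a + b)/2)² + (a - b)²/2`. -/
lemma stdGaussPdf_sub_mul_stdGaussPdf_sub (a b y : ℝ) :
    stdGaussPdf (y - a) * stdGaussPdf (y - b)
      = (2 * π)⁻¹ * Real.exp (-(a - b) ^ 2 / 4) * Real.exp (-1 * (y - (a + b) / 2) ^ 2) := by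
  have hconst : (2 * π) ^ (-(1 / 2) : ℝ) * (2 * π) ^ (-(1 / 2) : ℝ) = (2 * π)⁻¹ := by
    rw [← Real.rpow_add (by positivity)]
    norm_num [Real.rpow_neg_one]
  unfold stdGaussPdf
  calc _ = ((2 * π) ^ (-(1 / 2) : ℝ) * (2 * π) ^ (-(1 / 2) : ℝ))
        * Real.exp (-(y - a) ^ 2 / 2 + -(y - b) ^ 2 / 2) := by
          rw [Real.exp_add]; ring
    _ = _ := by
          rw [hconst, mul_assoc, ← Real.exp_add]
          congr 2
          ring

lemma integrable_stdGaussPdf_sub_mul_stdGaussPdf_sub (a b : ℝ) :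
    Integrable fun y => stdGaussPdf (y - a) * stdGaussPdf (y - b) := by
  simp_rw [stdGaussPdf_sub_mul_stdGaussPdf_sub a b]
  exact ((integrable_exp_neg_mul_sq one_pos).comp_sub_right _).const_mul _

lemma integral_stdGaussPdf_sub_mul_stdGaussPdf_sub (a b : ℝ) :
    ∫ y, stdGaussPdf (y - a) * stdGaussPdf (y - b)
      = 1 / (2 * √π) * Real.exp (-(a - b) ^ 2 / 4) := by
  simp_rw [stdGaussPdf_sub_mul_stdGaussPdf_sub a b]
  rw [integral_const_mul, integral_sub_right_eq_self (fun y => Real.exp (-1 * y ^ 2)),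
    integral_gaussian, div_one]
  have hconst : (2 * π)⁻¹ * √π = 1 / (2 * √π) := by
    have : (0 : ℝ) < √π := Real.sqrt_pos.mpr Real.pi_pos
    field_simp
    exact Real.sq_sqrt Real.pi_pos.le
  rw [mul_right_comm, hconst]

section FiniteMeasure

variable {Ω : Type*} [MeasurableSpace Ω] {μ : Measure Ω} [IsFiniteMeasure μ]
  {Z Z₁ Z₂ : Ω → ℝ}

lemma memLp_stdGaussPdf_sub (hZ : Measurable Z) (y : ℝ) (p : ℝ≥0∞) :
    MemLp (fun ω => stdGaussPdf (y - Z ω)) p μ :=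
  .of_bound (by fun_prop) _ (ae_of_all _ fun ω => by
      rw [Real.norm_of_nonneg (stdGaussPdf_pos _).le]
      exact stdGaussPdf_le _)

lemma integral_stdGaussPdf_sub_pos [NeZero μ] (hZ : Measurable Z) (y : ℝ) :
    0 < ∫ ω, stdGaussPdf (y - Z ω) ∂μ := by
  rw [integral_pos_iff_support_of_nonneg (fun ω => (stdGaussPdf_pos _).le)
    ((memLp_stdGaussPdf_sub hZ y 1).integrable le_rfl)]
  have hsupp : Function.support (fun ω => stdGaussPdf (y - Z ω)) = univ :=
    eq_univ_of_forall fun ω => (stdGaussPdf_pos _).ne'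
  simp [hsupp, NeZero.ne μ]

lemma integrable_prod_stdGaussPdf_sub_mul (hZ₁ : Measurable Z₁) (hZ₂ : Measurable Z₂) :
    Integrable (fun p : Ω × ℝ => stdGaussPdf (p.2 - Z₁ p.1) * stdGaussPdf (p.2 - Z₂ p.1))
      (μ.prod volume) := by
  have hmeas : Measurable
      fun p : Ω × ℝ => stdGaussPdf (p.2 - Z₁ p.1) * stdGaussPdf (p.2 - Z₂ p.1) := by
    fun_prop
  refine (integrable_prod_iff hmeas.aestronglyMeasurable).2
    ⟨ae_of_all _ fun ω => integrable_stdGaussPdf_sub_mul_stdGaussPdf_sub (Z₁ ω) (Z₂ ω), ?_⟩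
  have hnorm (ω : Ω) : ∫ y, ‖stdGaussPdf (y - Z₁ ω) * stdGaussPdf (y - Z₂ ω)‖
      = 1 / (2 * √π) * Real.exp (-(Z₁ ω - Z₂ ω) ^ 2 / 4) := by
    rw [← integral_stdGaussPdf_sub_mul_stdGaussPdf_sub]
    congr 1 with y
    exact Real.norm_of_nonneg (mul_pos (stdGaussPdf_pos _) (stdGaussPdf_pos _)).le
  simp_rw [hnorm]
  have hexp : Measurable fun ω => Real.exp (-(Z₁ ω - Z₂ ω) ^ 2 / 4) := by fun_prop
  refine (Integrable.of_bound hexp.aestronglyMeasurable 1 (ae_of_all _ fun ω => ?_)).const_mul _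
  rw [Real.norm_of_nonneg (Real.exp_pos _).le, Real.exp_le_one_iff]
  nlinarith [sq_nonneg (Z₁ ω - Z₂ ω)]

lemma integral_integral_stdGaussPdf_sub_mul (hZ₁ : Measurable Z₁) (hZ₂ : Measurable Z₂) :
    ∫ y, ∫ ω, stdGaussPdf (y - Z₁ ω) * stdGaussPdf (y - Z₂ ω) ∂μ
      = 1 / (2 * √π) * ∫ ω, Real.exp (-(Z₁ ω - Z₂ ω) ^ 2 / 4) ∂μ := by
  rw [← integral_integral_swap (integrable_prod_stdGaussPdf_sub_mul hZ₁ hZ₂)]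
  simp_rw [integral_stdGaussPdf_sub_mul_stdGaussPdf_sub]
  exact integral_const_mul _ _

end FiniteMeasure

lemma integral_comp_mul_integral_comp_eq_of_indepFun {Ω E : Type*} [MeasurableSpace Ω]
    [MeasurableSpace E] {μ : Measure Ω} {X X₁ X₂ : Ω → E} (hX : Measurable X)
    (hX₁ : Measurable X₁) (hX₂ : Measurable X₂) (hindep : X₁ ⟂ᵢ[μ] X₂)
    (hid₁ : μ.map X₁ = μ.map X) (hid₂ : μ.map X₂ = μ.map X) {g h : E → ℝ}
    (hg : Measurable g) (hh : Measurable h) :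
    (∫ ω, g (X ω) ∂μ) * ∫ ω, h (X ω) ∂μ = ∫ ω, g (X₁ ω) * h (X₂ ω) ∂μ := by
  have e₁ : ∫ ω, g (X₁ ω) ∂μ = ∫ ω, g (X ω) ∂μ :=
    (IdentDistrib.comp ⟨hX₁.aemeasurable, hX.aemeasurable, hid₁⟩ hg).integral_eq
  have e₂ : ∫ ω, h (X₂ ω) ∂μ = ∫ ω, h (X ω) ∂μ :=
    (IdentDistrib.comp ⟨hX₂.aemeasurable, hX.aemeasurable, hid₂⟩ hh).integral_eq
  rw [← e₁, ← e₂]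
  exact ((hindep.comp hg hh).integral_mul_eq_mul_integral
    (hg.comp hX₁).aestronglyMeasurable (hh.comp hX₂).aestronglyMeasurable).symm

theorem V0_gaussian_noise_general
    {Ω : Type*} [MeasureSpace Ω] [IsProbabilityMeasure (ℙ : Measure Ω)]
    (X : Ω → ℝ) (hX : Measurable X)
    (X₁ X₂ : Ω → ℝ) (hX₁ : Measurable X₁) (hX₂ : Measurable X₂)
    (hindep' : ProbabilityTheory.IndepFun X₁ X₂ ℙ)
    (hid₁ : Measure.map X₁ ℙ = Measure.map X ℙ) (hid₂ : Measure.map X₂ ℙ = Measure.map X ℙ) :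
    ∫ y in {y : ℝ | 0 < ∫ ω, stdGaussPdf (y - X ω) ∂ℙ},
        ∫ ω, (stdGaussPdf (y - X ω) - ∫ ω', stdGaussPdf (y - X ω') ∂ℙ) ^ 2 ∂ℙ
      = (1 / (2 * Real.sqrt π))
        * (1 - ∫ ω, Real.exp (-(X₁ ω - X₂ ω) ^ 2 / 4) ∂ℙ) := by
  have hsupp : {y : ℝ | 0 < ∫ ω, stdGaussPdf (y - X ω) ∂ℙ} = univ :=
    eq_univ_of_forall (integral_stdGaussPdf_sub_pos hX)
  have hvar (y : ℝ) : ∫ ω, (stdGaussPdf (y - X ω) - ∫ ω', stdGaussPdf (y - X ω') ∂ℙ) ^ 2 ∂ℙ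
      = ∫ ω, stdGaussPdf (y - X ω) * stdGaussPdf (y - X ω) ∂ℙ
        - ∫ ω, stdGaussPdf (y - X₁ ω) * stdGaussPdf (y - X₂ ω) ∂ℙ := by
    have hφ : Measurable fun t => stdGaussPdf (y - t) := by fun_prop
    rw [← variance_eq_integral (X := fun ω => stdGaussPdf (y - X ω)) (hφ.comp hX).aemeasurable,
      variance_eq_sub (memLp_stdGaussPdf_sub hX y 2), sq (∫ ω, _ ∂ℙ),
      integral_comp_mul_integral_comp_eq_of_indepFun hX hX₁ hX₂ hindep' hid₁ hid₂ hφ hφ]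
    simp only [Pi.pow_apply, sq]
  rw [hsupp, Measure.restrict_univ]
  simp_rw [hvar]
  rw [integral_sub (integrable_prod_stdGaussPdf_sub_mul hX hX).integral_prod_right
      (integrable_prod_stdGaussPdf_sub_mul hX₁ hX₂).integral_prod_right,
    integral_integral_stdGaussPdf_sub_mul hX hX, integral_integral_stdGaussPdf_sub_mul hX₁ hX₂]
  simp [mul_sub]

/-- **Gaussian noise example.** Let `Y = X + W` with `W ~ N(0,1)` independent of `X`, so
that the conditional density of `Y` given `X = x` is `f(y|x) = φ(y − x)`. Then
`V_0(Y|X) = (1/(2√π)) (1 − E[exp(−(X₁ − X₂)²/4)])`, where `X₁, X₂` are independent copies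
of `X`. Here `V_0(Y|X) = ∫_{S_Y} E[(f(y|X) − f_Y(y))²] dy` with
`f_Y(y) = E[f(y|X)]` and `S_Y = {y : f_Y(y) > 0}`. -/
theorem V0_gaussian_noise
    {Ω : Type*} [MeasureSpace Ω] [IsProbabilityMeasure (ℙ : Measure Ω)]
    (X W : Ω → ℝ) (hX : Measurable X) (hW : Measurable W)
    (hindep : ProbabilityTheory.IndepFun X W ℙ)
    (hWlaw : Measure.map W ℙ = ProbabilityTheory.gaussianReal 0 1)
    (Y : Ω → ℝ) (hY : Y = fun ω => X ω + W ω)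
    (X₁ X₂ : Ω → ℝ) (hX₁ : Measurable X₁) (hX₂ : Measurable X₂)
    (hindep' : ProbabilityTheory.IndepFun X₁ X₂ ℙ)
    (hid₁ : Measure.map X₁ ℙ = Measure.map X ℙ) (hid₂ : Measure.map X₂ ℙ = Measure.map X ℙ) :
    ∫ y in {y : ℝ | 0 < ∫ ω, stdGaussPdf (y - X ω) ∂ℙ},
        ∫ ω, (stdGaussPdf (y - X ω) - ∫ ω', stdGaussPdf (y - X ω') ∂ℙ) ^ 2 ∂ℙ
      = (1 / (2 * Real.sqrt π))
        * (1 - ∫ ω, Real.exp (-(X₁ ω - X₂ ω) ^ 2 / 4) ∂ℙ) :=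
  V0_gaussian_noise_general X hX X₁ X₂ hX₁ hX₂ hindep' hid₁ hid₂
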